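/- arXiv:1708.02773 — 7 statements merged into one kernel-verified Lean document; each statement's English description precedes it below -/
import Mathlib

section
/- For every real number r with |r| > 1 and every complex number z, the equation Complex.sinh z = r * Complex.cosh z holds if and only if there exists an integer k such that z = Real.artanh (1/r) + (k + 1/2) * π * I. In particular, no solution is real. -/
/-!
Multiplying by `2 exp z`, the equation `sinh z = r cosh z` becomes `(1 - r) exp (2z) = 1 + r`.
For `|r| > 1` the number `(1 + r) / (1 - r)` is a negative real, whose complex logarithms are
`log ((r + 1) / (r - 1)) + (2k + 1) π i = 2 artanh (1 / r) + (2k + 1) π i`. Halving gives the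
solutions, and their imaginary parts `(k + 1/2) π` never vanish.
-/

/-- The inverse hyperbolic tangent on `(-1, 1)` (not present in Mathlib),
`artanh x = (1/2) · log((1+x)/(1-x))`. -/
noncomputable def Real.artanh' (x : ℝ) : ℝ := (1 / 2) * Real.log ((1 + x) / (1 - x))

open Complex
open scoped Real

theorem Complex.sinh_eq_mul_cosh_iff_exp_two_mul {r : ℂ} (hr : r ≠ 1) (z : ℂ) :
    sinh z = r * cosh z ↔ exp (2 * z) = (1 + r) / (1 - r) := by
  have h1r : 1 - r ≠ 0 := sub_ne_zero.mpr hr.symm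
  have key : 2 * exp z * (sinh z - r * cosh z) = (1 - r) * exp (2 * z) - (1 + r) := by
    rw [sinh, cosh, show exp (2 * z) = exp z * exp z by rw [two_mul, exp_add], exp_neg]
    field_simp
    ring
  rw [eq_div_iff h1r, ← sub_eq_zero, ← sub_eq_zero (a := _ * _), mul_comm _ (1 - r), ← key]
  simp [exp_ne_zero]

theorem Complex.exp_eq_ofReal_iff_of_neg {x : ℝ} (hx : x < 0) (w : ℂ) :
    exp w = x ↔ ∃ k : ℤ, w = Real.log (-x) + (2 * k + 1) * π * I := by
  have hx' : (x : ℂ) = exp (Real.log (-x) + π * I) := by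
    rw [exp_add, exp_pi_mul_I, ← ofReal_exp, Real.exp_log (neg_pos.mpr hx)]
    push_cast
    ring
  rw [hx', exp_eq_exp_iff_exists_int]
  refine exists_congr fun k => ?_
  constructor <;> intro h <;> linear_combination h

theorem one_add_div_one_sub_neg_of_one_lt_abs {r : ℝ} (hr : 1 < |r|) : (1 + r) / (1 - r) < 0 := by
  rcases lt_abs.mp hr with h | h
  · exact div_neg_of_pos_of_neg (by linarith) (by linarith)
  · exact div_neg_of_neg_of_pos (by linarith) (by linarith)

theorem Real.two_mul_artanh'_inv {r : ℝ} (hr : r ≠ 0) :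
    2 * artanh' r⁻¹ = log (-((1 + r) / (1 - r))) := by
  rw [artanh', ← mul_div_mul_left (1 + r⁻¹) _ hr, mul_add, mul_sub, mul_inv_cancel₀ hr, mul_one,
    add_comm r, ← div_neg, neg_sub]
  ring

theorem Int.cast_add_half_ne_zero {K : Type*} [Field K] [CharZero K] (k : ℤ) :
    (k : K) + 1 / 2 ≠ 0 := by
  intro h
  have : (2 * k + 1 : ℤ) = 0 := by exact_mod_cast (by linear_combination 2 * h : (2 * k + 1 : K) = 0)
  omega

/-- For every real number `r` with `|r| > 1` and every complex number `z`, the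
equation `Complex.sinh z = r * Complex.cosh z` holds if and only if there exists an integer `k`
such that `z = Real.artanh (1/r) + (k + 1/2) * π * I`.  In particular no solution is real. -/
theorem complex_sinh_eq_mul_cosh_iff_of_one_lt_abs (r : ℝ) (hr : 1 < |r|) (z : ℂ) :
    (Complex.sinh z = (r : ℂ) * Complex.cosh z ↔
      ∃ k : ℤ, z = (Real.artanh' (1 / r) : ℂ) + ((k : ℂ) + 1 / 2) * (Real.pi : ℂ) * Complex.I) ∧
    (Complex.sinh z = (r : ℂ) * Complex.cosh z → z.im ≠ 0) := by
  have hr0 : r ≠ 0 := by rintro rfl; norm_num at hr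
  have hr1 : (r : ℂ) ≠ 1 := by
    rintro h; simp [ofReal_eq_one.mp h] at hr
  have hC : ((1 + r) / (1 - r) : ℝ) = ((1 + r : ℂ) / (1 - r)) := by push_cast; rfl
  have solutions : sinh z = r * cosh z ↔
      ∃ k : ℤ, z = (Real.artanh' (1 / r) : ℂ) + ((k : ℂ) + 1 / 2) * π * I := by
    rw [sinh_eq_mul_cosh_iff_exp_two_mul hr1, ← hC,
      exp_eq_ofReal_iff_of_neg (one_add_div_one_sub_neg_of_one_lt_abs hr),
      ← Real.two_mul_artanh'_inv hr0, one_div]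
    refine exists_congr fun k => ?_
    push_cast
    constructor <;> intro h
    · linear_combination h / 2
    · linear_combination 2 * h
  refine ⟨solutions, fun h => ?_⟩
  obtain ⟨k, rfl⟩ := solutions.mp h
  simpa using mul_ne_zero (Int.cast_add_half_ne_zero k) Real.pi_ne_zero
end

section
/- The supremum over all real s of the kernels LinearMap.ker( cosh(s·b) • (1 : E →ₗ[ℝ] E) − (sinh(s·b)/b) • A ) equals the whole space E (i.e. this supremum of submodules is ⊤) if and only if every real eigenvalue λ of A satisfies |λ| > b. -/
open Module End

namespace Real

theorem exists_cosh_eq_sinh_mul_iff (r : ℝ) : (∃ t, cosh t = sinh t * r) ↔ 1 < |r| := by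
  have cosh_eq_iff (t : ℝ) : cosh t = sinh t * r ↔ tanh t * r = 1 := by
    rw [tanh_eq_sinh_div_cosh, div_mul_eq_mul_div, div_eq_one_iff_eq (cosh_pos t).ne', eq_comm]
  simp_rw [cosh_eq_iff]
  constructor
  · rintro ⟨t, ht⟩
    have h := congrArg abs ht
    rw [abs_mul, abs_one] at h
    nlinarith [abs_tanh_lt_one t, abs_nonneg r, abs_nonneg (tanh t)]
  · intro hr
    have hr₀ : r ≠ 0 := by rintro rfl; norm_num at hr
    have hinv : r⁻¹ ∈ Set.Ioo (-1 : ℝ) 1 := by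
      rw [Set.mem_Ioo, ← abs_lt, abs_inv]
      exact inv_lt_one_of_one_lt₀ hr
    exact ⟨artanh r⁻¹, by rw [tanh_artanh hinv, inv_mul_cancel₀ hr₀]⟩

end Real

theorem Module.End.eigenspace_le_ker_smul_one_sub_smul {R M : Type*} [CommRing R] [AddCommGroup M]
    [Module R M] (A : End R M) {a c μ : R} (h : a = c * μ) :
    eigenspace A μ ≤ LinearMap.ker (a • (1 : End R M) - c • A) := by
  intro x hx
  rw [mem_eigenspace_iff] at hx
  simp [hx, h, mul_smul]

namespace LinearMap.IsSymmetric

variable {E : Type*} [NormedAddCommGroup E] [InnerProductSpace ℝ E] {A : E →ₗ[ℝ] E}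

open scoped RealInnerProductSpace

theorem ker_smul_one_sub_smul_le_orthogonal_eigenspace (hA : A.IsSymmetric) {a c μ : ℝ}
    (h : a ≠ c * μ) : ker (a • (1 : E →ₗ[ℝ] E) - c • A) ≤ (eigenspace A μ)ᗮ := by
  intro y hy
  rw [Submodule.mem_orthogonal]
  intro x hx
  rw [mem_eigenspace_iff] at hx
  have hy : a • y - c • A y = 0 := by simpa using hy
  have : (a - c * μ) * ⟪x, y⟫ = 0 := by
    calc (a - c * μ) * ⟪x, y⟫ = ⟪x, a • y - c • A y⟫ := by
          rw [inner_sub_right, real_inner_smul_right, real_inner_smul_right, ← hA, hx,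
            real_inner_smul_left]
          ring
      _ = 0 := by rw [hy, inner_zero_right]
  exact (mul_eq_zero.mp this).resolve_left (sub_ne_zero.mpr h)

theorem iSup_ker_smul_one_sub_smul_eq_top_iff [FiniteDimensional ℝ E] (hA : A.IsSymmetric)
    {ι : Type*} (a c : ι → ℝ) :
    ⨆ i, ker (a i • (1 : E →ₗ[ℝ] E) - c i • A) = ⊤ ↔
      ∀ μ, HasEigenvalue A μ → ∃ i, a i = c i * μ := by
  constructor
  · intro htop μ hμ
    by_contra! hne
    have hle : ⊤ ≤ (eigenspace A μ)ᗮ :=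
      htop ▸ iSup_le fun i ↦ hA.ker_smul_one_sub_smul_le_orthogonal_eigenspace (hne i)
    exact hμ ((Submodule.orthogonal_eq_top_iff _).mp (top_le_iff.mp hle))
  · intro h
    have hspan : ⨆ μ, eigenspace A μ = ⊤ :=
      Submodule.orthogonal_eq_bot_iff.mp hA.orthogonalComplement_iSup_eigenspaces_eq_bot
    refine top_le_iff.mp (hspan ▸ iSup_le fun μ ↦ ?_)
    by_cases hμ : HasEigenvalue A μ
    · obtain ⟨i, hi⟩ := h μ hμ
      exact le_iSup_of_le i (eigenspace_le_ker_smul_one_sub_smul A hi)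
    · rw [hasEigenvalue_iff, not_not] at hμ
      exact hμ ▸ bot_le

end LinearMap.IsSymmetric

/-- Let `E` be a finite-dimensional real inner product space, `A` a self-adjoint
endomorphism of `E` and `b > 0`.  The supremum over all real `s` of the kernels
`ker(cosh(s·b) • id − (sinh(s·b)/b) • A)` equals the whole space `E` if and only if every real
eigenvalue `λ` of `A` satisfies `|λ| > b`. -/
theorem iSup_ker_cosh_smul_sub_sinh_smul_eq_top_iff
    {E : Type*} [NormedAddCommGroup E] [InnerProductSpace ℝ E] [FiniteDimensional ℝ E]
    (A : E →ₗ[ℝ] E) (hA : A.IsSymmetric) (b : ℝ) (hb : 0 < b) :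
    (⨆ s : ℝ,
        LinearMap.ker (Real.cosh (s * b) • (1 : E →ₗ[ℝ] E) - (Real.sinh (s * b) / b) • A)) = ⊤ ↔
      ∀ l : ℝ, Module.End.HasEigenvalue A l → b < |l| := by
  rw [hA.iSup_ker_smul_one_sub_smul_eq_top_iff]
  refine forall₂_congr fun l _ ↦ ?_
  have hreparam : (∃ s, Real.cosh (s * b) = Real.sinh (s * b) / b * l) ↔
      ∃ t, Real.cosh t = Real.sinh t * (l / b) := by
    refine ⟨fun ⟨s, hs⟩ ↦ ⟨s * b, by rw [hs]; ring⟩, fun ⟨t, ht⟩ ↦ ⟨t / b, ?_⟩⟩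
    rw [div_mul_cancel₀ t hb.ne', ht]
    ring
  rw [hreparam, Real.exists_cosh_eq_sinh_mul_iff, abs_div, abs_of_pos hb, one_lt_div hb]
end

section
/- Let V be a vector space over ℂ, T : V →ₗ[ℂ] V an arbitrary ℂ-linear endomorphism, b > 0 a real number, λ a real number, and k an integer. (i) If |λ| > b and z := (Real.artanh (b/λ) + k·π·I)/b, then LinearMap.ker( Complex.cosh(z·b) • (1 : V →ₗ[ℂ] V) − (Complex.sinh(z·b)/b) • T ) = LinearMap.ker( T − (λ : ℂ) • (1 : V →ₗ[ℂ] V) ). (ii) If |λ| < b and z := (Real.artanh (λ/b) + (k + 1/2)·π·I)/b, then the same identity holds: LinearMap.ker( Complex.cosh(z·b) • 1 − (Complex.sinh(z·b)/b) • T ) = LinearMap.ker( T − (λ : ℂ) • 1 ). -/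
/-!
Put `w = z b`. In case (i), `w = a + kπi` with `tanh a = b/λ`, so `cosh w` and `sinh w` are
`cos(kπ) cosh a` and `cos(kπ) sinh a`; in case (ii), `w = a + (k + 1/2)πi` with `tanh a = λ/b`,
so they are `i sin θ sinh a` and `i sin θ cosh a` for `θ = (k + 1/2)π`. Either way
`b cosh w = λ sinh w`, which together with `cosh² w - sinh² w = 1` forces `sinh w ≠ 0`, and then
`cosh w • 1 - (sinh w / b) • T = -(sinh w / b) • (T - λ • 1)`.
-/

open Complex

theorem LinearMap.ker_smul_one_sub_div_smul_eq_ker_sub_smul {K V : Type*} [Field K]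
    [AddCommGroup V] [Module K V] (T : V →ₗ[K] V) {b l c s : K} (hb : b ≠ 0) (hs : s ≠ 0)
    (h : b * c = l * s) :
    ker (c • (1 : V →ₗ[K] V) - (s / b) • T) = ker (T - l • (1 : V →ₗ[K] V)) := by
  have hc : c = l * (s / b) := by field_simp; linear_combination h
  have : c • (1 : V →ₗ[K] V) - (s / b) • T = (-(s / b)) • (T - l • (1 : V →ₗ[K] V)) := by
    rw [hc]; module
  rw [this, ker_smul _ _ (neg_ne_zero.mpr (div_ne_zero hs hb))]

theorem Complex.sinh_ne_zero_of_mul_cosh_eq_mul_sinh {b l w : ℂ} (hb : b ≠ 0)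
    (h : b * cosh w = l * sinh w) : sinh w ≠ 0 := by
  intro hs
  have hc : cosh w = 0 := by simpa [hs, hb] using h
  simpa [hs, hc] using cosh_sq_sub_sinh_sq w

theorem Complex.ker_cosh_smul_sub_sinh_div_smul_eq_ker_sub_smul {V : Type*} [AddCommGroup V]
    [Module ℂ V] (T : V →ₗ[ℂ] V) {b l w : ℂ} (hb : b ≠ 0) (h : b * cosh w = l * sinh w) :
    LinearMap.ker (cosh w • (1 : V →ₗ[ℂ] V) - (sinh w / b) • T) =
      LinearMap.ker (T - l • (1 : V →ₗ[ℂ] V)) :=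
  LinearMap.ker_smul_one_sub_div_smul_eq_ker_sub_smul T hb
    (sinh_ne_zero_of_mul_cosh_eq_mul_sinh hb h) h

theorem Complex.mul_cosh_add_mul_I_eq_of_sin_eq_zero {b l a θ : ℂ} (h : b * cosh a = l * sinh a)
    (hθ : sin θ = 0) : b * cosh (a + θ * I) = l * sinh (a + θ * I) := by
  rw [cosh_add, sinh_add, cosh_mul_I, sinh_mul_I, hθ]
  linear_combination cos θ * h

theorem Complex.mul_cosh_add_mul_I_eq_of_cos_eq_zero {b l a θ : ℂ} (h : b * sinh a = l * cosh a)
    (hθ : cos θ = 0) : b * cosh (a + θ * I) = l * sinh (a + θ * I) := by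
  rw [cosh_add, sinh_add, cosh_mul_I, sinh_mul_I, hθ]
  linear_combination sin θ * I * h

theorem Real.mul_sinh_artanh'_div {x y : ℝ} (hy : y ≠ 0) (hxy : |x / y| < 1) :
    y * sinh (artanh' (x / y)) = x * cosh (artanh' (x / y)) := by
  have hmem : x / y ∈ Set.Ioo (-1) 1 := abs_lt.mp hxy
  have htanh : tanh (artanh' (x / y)) = x / y := by
    rw [artanh', ← artanh_eq_half_log (Set.Ioo_subset_Icc_self hmem), tanh_artanh hmem]
  rw [tanh_eq_sinh_div_cosh, div_eq_div_iff (cosh_pos _).ne' hy] at htanh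
  linear_combination htanh

/-- Let `V` be a complex vector space, `T : V →ₗ[ℂ] V` an arbitrary ℂ-linear
endomorphism, `b > 0`, `λ` a real number and `k` an integer.
(i) If `|λ| > b` and `z := (artanh (b/λ) + k·π·I)/b`, then
`ker(cosh(z·b) • id − (sinh(z·b)/b) • T) = ker(T − λ • id)`.
(ii) If `|λ| < b` and `z := (artanh (λ/b) + (k + 1/2)·π·I)/b`, then the same identity holds. -/
theorem ker_complex_cosh_smul_sub_sinh_smul_eq_ker_sub_smul
    {V : Type*} [AddCommGroup V] [Module ℂ V]
    (T : V →ₗ[ℂ] V) (b : ℝ) (hb : 0 < b) (l : ℝ) (k : ℤ) :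
    (b < |l| → ∀ z : ℂ,
      z = ((Real.artanh' (b / l) : ℂ) + (k : ℂ) * (Real.pi : ℂ) * Complex.I) / (b : ℂ) →
      LinearMap.ker (Complex.cosh (z * (b : ℂ)) • (1 : V →ₗ[ℂ] V)
          - (Complex.sinh (z * (b : ℂ)) / (b : ℂ)) • T) =
        LinearMap.ker (T - (l : ℂ) • (1 : V →ₗ[ℂ] V))) ∧
    (|l| < b → ∀ z : ℂ,
      z = ((Real.artanh' (l / b) : ℂ) + ((k : ℂ) + 1 / 2) * (Real.pi : ℂ) * Complex.I) / (b : ℂ) →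
      LinearMap.ker (Complex.cosh (z * (b : ℂ)) • (1 : V →ₗ[ℂ] V)
          - (Complex.sinh (z * (b : ℂ)) / (b : ℂ)) • T) =
        LinearMap.ker (T - (l : ℂ) • (1 : V →ₗ[ℂ] V))) := by
  have hbC : (b : ℂ) ≠ 0 := by exact_mod_cast hb.ne'
  refine ⟨fun hl z hz => ?_, fun hl z hz => ?_⟩
  · have hl0 : l ≠ 0 := by rintro rfl; simp only [abs_zero] at hl; linarith
    rw [hz, div_mul_cancel₀ _ hbC]
    refine ker_cosh_smul_sub_sinh_div_smul_eq_ker_sub_smul T hbC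
      (mul_cosh_add_mul_I_eq_of_sin_eq_zero ?_ (sin_int_mul_pi k))
    have hbl : |b / l| < 1 := by
      rwa [abs_div, abs_of_pos hb, div_lt_one (hb.trans hl)]
    exact_mod_cast (Real.mul_sinh_artanh'_div hl0 hbl).symm
  · rw [hz, div_mul_cancel₀ _ hbC]
    refine ker_cosh_smul_sub_sinh_div_smul_eq_ker_sub_smul T hbC
      (mul_cosh_add_mul_I_eq_of_cos_eq_zero ?_ (cos_eq_zero_iff.mpr ⟨k, by ring⟩))
    have hlb : |l / b| < 1 := by
      rwa [abs_div, abs_of_pos hb, div_lt_one hb]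
    exact_mod_cast Real.mul_sinh_artanh'_div hb.ne' hlb
end

section
/- The supremum over all complex z of the kernels LinearMap.ker( Complex.cosh(z·b) • (1 : E_ℂ →ₗ[ℂ] E_ℂ) − (Complex.sinh(z·b)/b) • A_ℂ ) equals the whole space E_ℂ (i.e. this supremum of ℂ-submodules is ⊤) if and only if neither b nor −b is an eigenvalue of A. -/
/-!
A symmetric `A` is diagonalizable, and `cosh (z b) • 1 - (sinh (z b) / b) • A_ℂ` acts on `1 ⊗ x`,
for an eigenvector `x` with eigenvalue `μ`, by the scalar
`cosh (z b) - sinh (z b) μ / b = ((1 - μ / b) e^{z b} + (1 + μ / b) e^{-z b}) / 2`.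
This scalar has a zero `z` exactly when `μ ≠ ± b`. So if no eigenvalue is `± b`, every `1 ⊗ x`
lies in one of the kernels, and these vectors span `E_ℂ`. Conversely, if `x` is an eigenvector for
`μ = ± b`, then by symmetry `⟪x, ·⟫` is a left eigenvector of `A`; its complexification kills every
kernel but not `1 ⊗ x`.
-/

open scoped TensorProduct

open Complex in
theorem Complex.exists_cosh_eq_sinh_mul_iff (r : ℂ) :
    (∃ w : ℂ, cosh w = sinh w * r) ↔ r ≠ 1 ∧ r ≠ -1 := by
  constructor
  · rintro ⟨w, hw⟩
    refine ⟨fun hr => exp_ne_zero (-w) ?_, fun hr => exp_ne_zero w ?_⟩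
    · rw [← cosh_sub_sinh, hw, hr, mul_one, sub_self]
    · rw [← cosh_add_sinh, hw, hr]; ring
  · rintro ⟨hr₁, hr₂⟩
    obtain ⟨u, hu⟩ : (r + 1) / (r - 1) ∈ Set.range exp := by
      rw [range_exp]
      exact div_ne_zero (mt add_eq_zero_iff_eq_neg.1 hr₂) (sub_ne_zero.2 hr₁)
    -- `cosh w = sinh w * r`, multiplied by `2 * exp w`, reads `exp (2 * w) * (r - 1) = r + 1`
    refine ⟨u / 2, mul_left_cancel₀ (exp_ne_zero (u / 2)) ?_⟩
    have h2 : exp (u / 2) * exp (u / 2) * (r - 1) = r + 1 := by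
      rw [← exp_add, add_halves, hu, div_mul_cancel₀ _ (sub_ne_zero.2 hr₁)]
    have h0 : exp (u / 2) * exp (-(u / 2)) = 1 := by rw [← exp_add, add_neg_cancel, exp_zero]
    rw [cosh, sinh]
    linear_combination (-1 / 2 : ℂ) * h2 + (1 + r) / 2 * h0

open Complex in
theorem Complex.exists_cosh_mul_eq_sinh_mul_div_mul_iff {b : ℂ} (hb : b ≠ 0) (μ : ℂ) :
    (∃ z : ℂ, cosh (z * b) = sinh (z * b) / b * μ) ↔ μ ≠ b ∧ μ ≠ -b := by
  have hrescale : (∃ z : ℂ, cosh (z * b) = sinh (z * b) / b * μ) ↔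
      ∃ w : ℂ, cosh w = sinh w * (μ / b) := by
    constructor
    · rintro ⟨z, hz⟩
      exact ⟨z * b, by rw [hz]; ring⟩
    · rintro ⟨w, hw⟩
      exact ⟨w / b, by rw [div_mul_cancel₀ _ hb, hw]; ring⟩
  rw [hrescale, exists_cosh_eq_sinh_mul_iff, ne_eq, ne_eq, div_eq_one_iff_eq hb, div_eq_iff hb,
    neg_one_mul]

open LinearMap Module.End

theorem Submodule.eq_top_of_one_tmul_mem {R A M : Type*} [CommSemiring R] [Semiring A]
    [Algebra R A] [AddCommMonoid M] [Module R M] {S : Submodule A (A ⊗[R] M)}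
    (h : ∀ m, 1 ⊗ₜ m ∈ S) : S = ⊤ := by
  rw [eq_top_iff, ← baseChange_top, baseChange_eq_span, span_le]
  rintro _ ⟨m, -, rfl⟩
  exact h m

section
variable {R A M : Type*} [CommRing R] [AddCommGroup M] [Module R M]

theorem Module.End.eigenspace_le_ker_smul_one_sub_smul_s9 {f : Module.End R M} {μ c s : R}
    (h : c = s * μ) : eigenspace f μ ≤ ker (c • 1 - s • f) := fun m hm => by
  rw [mem_eigenspace_iff] at hm
  simp [hm, h, smul_smul]

theorem LinearMap.ker_smul_one_sub_smul_le_ker {N : Type*} [AddCommGroup N] [Module R N]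
    [IsDomain R] [Module.IsTorsionFree R N] {f : Module.End R M}
    {φ : M →ₗ[R] N} {μ c s : R} (hφ : φ ∘ₗ f = μ • φ) (h : c ≠ s * μ) :
    ker (c • 1 - s • f) ≤ ker φ := fun m hm => by
  have : (c - s * μ) • φ m = 0 := by
    rw [sub_smul, mul_smul, ← LinearMap.smul_apply μ, ← hφ]
    simpa [sub_eq_zero] using congrArg φ hm
  exact (smul_eq_zero.1 this).resolve_left (sub_ne_zero.2 h)

variable [CommRing A] [Algebra R A]

theorem Module.End.tmul_mem_eigenspace_baseChange {f : Module.End R M} {μ : R} {m : M}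
    (hm : m ∈ eigenspace f μ) (a : A) :
    a ⊗ₜ m ∈ eigenspace (f.baseChange A) (algebraMap R A μ) := by
  rw [mem_eigenspace_iff] at hm ⊢
  rw [baseChange_tmul, hm, TensorProduct.tmul_smul, algebraMap_smul]

theorem Module.End.iSup_ker_smul_one_sub_smul_baseChange_eq_top {ι : Type*} {f : Module.End R M}
    (hf : (⨆ μ, eigenspace f μ) = ⊤) (c s : ι → A)
    (h : ∀ μ, f.HasEigenvalue μ → ∃ i, c i = s i * algebraMap R A μ) :
    ⨆ i, ker (c i • 1 - s i • f.baseChange A) = ⊤ := by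
  refine Submodule.eq_top_of_one_tmul_mem fun m => ?_
  suffices (⨆ μ, eigenspace f μ) ≤ Submodule.comap (TensorProduct.mk R A M 1)
      ((⨆ i, ker (c i • 1 - s i • f.baseChange A)).restrictScalars R) from
    this (hf ▸ Submodule.mem_top)
  refine iSup_le fun μ => ?_
  by_cases hμ : f.HasEigenvalue μ
  · obtain ⟨i, hi⟩ := h μ hμ
    exact fun m hm => Submodule.mem_iSup_of_mem i <|
      eigenspace_le_ker_smul_one_sub_smul_s9 hi (tmul_mem_eigenspace_baseChange hm 1)
  · rw [hasEigenvalue_iff, not_not] at hμ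
    exact hμ ▸ bot_le

end

theorem LinearMap.IsSymmetric.innerₛₗ_comp_eq_smul {E : Type*} [NormedAddCommGroup E]
    [InnerProductSpace ℝ E] {f : E →ₗ[ℝ] E} (hf : f.IsSymmetric) {μ : ℝ} {x : E}
    (hx : f x = μ • x) : innerₛₗ ℝ x ∘ₗ f = μ • innerₛₗ ℝ x := by
  ext y
  simp [← hf x y, hx, real_inner_smul_left]

theorem LinearMap.IsSymmetric.iSup_ker_smul_one_sub_smul_baseChange_ne_top {E ι : Type*}
    [NormedAddCommGroup E] [InnerProductSpace ℝ E] {f : E →ₗ[ℝ] E} (hf : f.IsSymmetric) {μ : ℝ}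
    (hμ : HasEigenvalue f μ) (c s : ι → ℂ) (h : ∀ i, c i ≠ s i * μ) :
    ⨆ i, ker (c i • 1 - s i • f.baseChange ℂ) ≠ ⊤ := by
  obtain ⟨x, hx⟩ := hμ.exists_hasEigenvector
  let φ : ℂ ⊗[ℝ] E →ₗ[ℂ] ℂ :=
    TensorProduct.AlgebraTensorModule.rid ℝ ℂ ℂ ∘ₗ (innerₛₗ ℝ x).baseChange ℂ
  have hφ : φ ∘ₗ f.baseChange ℂ = (μ : ℂ) • φ := by
    ext y
    have hy := congrArg (· y) (hf.innerₛₗ_comp_eq_smul hx.apply_eq_smul)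
    simp only [coe_comp, Function.comp_apply, smul_apply, innerₛₗ_apply_apply, smul_eq_mul] at hy
    simp [φ, Complex.real_smul, hy]
  have hφx : φ (1 ⊗ₜ x) ≠ 0 := by
    simpa [φ] using hx.2
  intro htop
  refine hφx (iSup_le (fun i => ker_smul_one_sub_smul_le_ker hφ (h i)) ?_)
  exact htop ▸ Submodule.mem_top

/-- Let `E` be a finite-dimensional real inner product space, `A` a self-adjoint
endomorphism of `E`, `b > 0`, `E_ℂ := ℂ ⊗[ℝ] E` and `A_ℂ := LinearMap.baseChange ℂ A`.  The
supremum over all complex `z` of the kernels `ker(cosh(z·b) • id − (sinh(z·b)/b) • A_ℂ)` equals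
the whole space `E_ℂ` if and only if neither `b` nor `−b` is an eigenvalue of `A`. -/
theorem iSup_ker_complexified_cosh_smul_sub_sinh_smul_eq_top_iff
    {E : Type*} [NormedAddCommGroup E] [InnerProductSpace ℝ E] [FiniteDimensional ℝ E]
    (A : E →ₗ[ℝ] E) (hA : A.IsSymmetric) (b : ℝ) (hb : 0 < b) :
    (⨆ z : ℂ, LinearMap.ker (Complex.cosh (z * (b : ℂ)) • (1 : ℂ ⊗[ℝ] E →ₗ[ℂ] ℂ ⊗[ℝ] E)
        - (Complex.sinh (z * (b : ℂ)) / (b : ℂ)) • LinearMap.baseChange ℂ A)) = ⊤ ↔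
      ¬ Module.End.HasEigenvalue A b ∧ ¬ Module.End.HasEigenvalue A (-b) := by
  have hb₀ : (b : ℂ) ≠ 0 := Complex.ofReal_ne_zero.2 hb.ne'
  have hsolve (μ : ℝ) := Complex.exists_cosh_mul_eq_sinh_mul_div_mul_iff hb₀ μ
  constructor
  · intro htop
    refine ⟨fun hμ => ?_, fun hμ => ?_⟩ <;>
      refine hA.iSup_ker_smul_one_sub_smul_baseChange_ne_top hμ _ _ (fun z hz => ?_) htop
    · exact ((hsolve b).1 ⟨z, hz⟩).1 rfl
    · exact ((hsolve (-b)).1 ⟨z, hz⟩).2 (Complex.ofReal_neg b)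
  · rintro ⟨hb₁, hb₂⟩
    have hE := Submodule.orthogonal_eq_bot_iff.1 hA.orthogonalComplement_iSup_eigenspaces_eq_bot
    refine iSup_ker_smul_one_sub_smul_baseChange_eq_top hE _ _ fun μ hμ => (hsolve μ).2 ⟨?_, ?_⟩
    · exact_mod_cast fun h : μ = b => hb₁ (h ▸ hμ)
    · exact_mod_cast fun h : μ = -b => hb₂ (h ▸ hμ)
end

section
/- For every complex number z, the determinant det( Complex.cos(z·b) • (1 : E_ℂ →ₗ[ℂ] E_ℂ) − (Complex.sin(z·b)/b) • A_ℂ ) vanishes if and only if there exist a real eigenvalue λ of A and an integer j such that z = ((if λ = 0 then π/2 else Real.arctan (b/λ)) + j·π)/b. In particular, every complex zero of this function is real, so the complex focal radii coincide with the real focal radii. -/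
open scoped TensorProduct

/-!
An orthonormal eigenbasis of `A` base-changes to a basis of `ℂ ⊗[ℝ] E` in which `A_ℂ` is diagonal
with the same real eigenvalues `λᵢ`, so the determinant is `∏ᵢ (cos w - sin w / b * λᵢ)` with
`w = z b`. For `λ ≠ 0` and `θ = arctan (b / λ)`, the factor is a nonzero multiple of
`sin (θ - w)`, and `sin` only vanishes on `πℤ`; for `λ = 0` it is `cos w`. Hence all zeros are real.
-/

namespace Complex

theorem sin_eq_mul_cos_iff (t : ℝ) (w : ℂ) :
    sin w = t * cos w ↔ ∃ j : ℤ, w = Real.arctan t + j * Real.pi := by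
  set θ := Real.arctan t
  have hcos : Real.cos θ ≠ 0 := (Real.cos_arctan_pos t).ne'
  have hsin : Real.sin θ = t * Real.cos θ := by
    rw [← Real.tan_arctan t, Real.tan_eq_sin_div_cos, div_mul_cancel₀ _ hcos]
  have hsin_sub : sin (θ - w) = Real.cos θ * (t * cos w - sin w) := by
    rw [sin_sub, ← ofReal_sin, ← ofReal_cos, hsin]
    push_cast
    ring
  calc sin w = t * cos w ↔ sin (θ - w) = 0 := by
        rw [hsin_sub, mul_eq_zero, sub_eq_zero, eq_comm, or_iff_right (ofReal_ne_zero.mpr hcos)]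
    _ ↔ ∃ j : ℤ, w = θ + j * Real.pi := by
        rw [sin_eq_zero_iff]
        constructor
        · rintro ⟨k, hk⟩
          exact ⟨-k, by push_cast; linear_combination -hk⟩
        · rintro ⟨j, hj⟩
          exact ⟨-j, by push_cast; linear_combination -hj⟩

theorem cos_sub_sin_div_mul_eq_zero_iff {b : ℝ} (hb : b ≠ 0) (l : ℝ) (w : ℂ) :
    cos w - sin w / b * l = 0 ↔
      ∃ j : ℤ, w = ((if l = 0 then Real.pi / 2 else Real.arctan (b / l) : ℝ) : ℂ)
        + j * Real.pi := by
  rcases eq_or_ne l 0 with rfl | hl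
  · simp only [if_pos, ofReal_zero, mul_zero, sub_zero, cos_eq_zero_iff]
    refine exists_congr fun j => ?_
    push_cast
    constructor <;> intro h <;> linear_combination h
  · have hb' : (b : ℂ) ≠ 0 := ofReal_ne_zero.mpr hb
    have hl' : (l : ℂ) ≠ 0 := ofReal_ne_zero.mpr hl
    have hfactor : cos w - sin w / b * l = -(l / b) * (sin w - (b / l : ℝ) * cos w) := by
      push_cast
      field_simp
      ring
    rw [if_neg hl, ← sin_eq_mul_cos_iff, hfactor, mul_eq_zero, neg_eq_zero,
      or_iff_right (div_ne_zero hl' hb'), sub_eq_zero]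

end Complex

namespace LinearMap.IsSymmetric

variable {E : Type*} [NormedAddCommGroup E] [InnerProductSpace ℝ E] [FiniteDimensional ℝ E]
  {A : E →ₗ[ℝ] E} {n : ℕ}

theorem det_smul_one_sub_smul_baseChange (hA : A.IsSymmetric) (hn : Module.finrank ℝ E = n)
    {K : Type*} [CommRing K] [Algebra ℝ K] (c s : K) :
    LinearMap.det (c • (1 : K ⊗[ℝ] E →ₗ[K] K ⊗[ℝ] E) - s • A.baseChange K)
      = ∏ i, (c - s * algebraMap ℝ K (hA.eigenvalues hn i)) := by
  classical
  set B := Algebra.TensorProduct.basis K (hA.eigenvectorBasis hn).toBasis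
  rw [← LinearMap.det_toMatrix B, map_sub (toMatrix B B), map_smul (toMatrix B B),
    map_smul (toMatrix B B), toMatrix_one, toMatrix_baseChange, toMatrix_eigenvectorBasis,
    Matrix.diagonal_map (map_zero _), Matrix.smul_one_eq_diagonal, ← Matrix.diagonal_smul,
    Matrix.diagonal_sub, Matrix.det_diagonal]
  rfl

theorem exists_eigenvalues_iff (hA : A.IsSymmetric) (hn : Module.finrank ℝ E = n)
    (P : ℝ → Prop) :
    (∃ i, P (hA.eigenvalues hn i)) ↔ ∃ l, Module.End.HasEigenvalue A l ∧ P l := by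
  constructor
  · rintro ⟨i, hi⟩
    exact ⟨_, hA.hasEigenvalue_eigenvalues hn i, hi⟩
  · rintro ⟨l, hl, hPl⟩
    obtain ⟨i, rfl⟩ := hA.exists_eigenvalues_eq hn hl
    exact ⟨i, hPl⟩

end LinearMap.IsSymmetric

/-- Let `E` be a finite-dimensional real inner product space, `A` a self-adjoint
endomorphism of `E`, `b > 0`, `E_ℂ := ℂ ⊗[ℝ] E` and `A_ℂ := LinearMap.baseChange ℂ A`.  For every
complex number `z`, the determinant `det(cos(z·b) • id − (sin(z·b)/b) • A_ℂ)` vanishes if and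
only if there exist a real eigenvalue `λ` of `A` and an integer `j` such that
`z = ((if λ = 0 then π/2 else arctan (b/λ)) + j·π)/b`.  In particular, every complex zero of this
function is real. -/
theorem det_complexified_cos_smul_sub_sin_smul_eq_zero_iff
    {E : Type*} [NormedAddCommGroup E] [InnerProductSpace ℝ E] [FiniteDimensional ℝ E]
    (A : E →ₗ[ℝ] E) (hA : A.IsSymmetric) (b : ℝ) (hb : 0 < b) (z : ℂ) :
    (LinearMap.det (Complex.cos (z * (b : ℂ)) • (1 : ℂ ⊗[ℝ] E →ₗ[ℂ] ℂ ⊗[ℝ] E)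
        - (Complex.sin (z * (b : ℂ)) / (b : ℂ)) • LinearMap.baseChange ℂ A) = 0 ↔
      ∃ l : ℝ, Module.End.HasEigenvalue A l ∧
        ∃ j : ℤ, z = (((if l = 0 then Real.pi / 2 else Real.arctan (b / l)) : ℝ)
          + (j : ℂ) * (Real.pi : ℂ)) / (b : ℂ)) ∧
    (LinearMap.det (Complex.cos (z * (b : ℂ)) • (1 : ℂ ⊗[ℝ] E →ₗ[ℂ] ℂ ⊗[ℝ] E)
        - (Complex.sin (z * (b : ℂ)) / (b : ℂ)) • LinearMap.baseChange ℂ A) = 0 → z.im = 0) := by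
  have hb' : (b : ℂ) ≠ 0 := Complex.ofReal_ne_zero.mpr hb.ne'
  have hzeros : LinearMap.det (Complex.cos (z * (b : ℂ)) • (1 : ℂ ⊗[ℝ] E →ₗ[ℂ] ℂ ⊗[ℝ] E)
        - (Complex.sin (z * (b : ℂ)) / (b : ℂ)) • LinearMap.baseChange ℂ A) = 0 ↔
      ∃ l : ℝ, Module.End.HasEigenvalue A l ∧
        ∃ j : ℤ, z = (((if l = 0 then Real.pi / 2 else Real.arctan (b / l)) : ℝ)
          + (j : ℂ) * (Real.pi : ℂ)) / (b : ℂ) := by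
    rw [hA.det_smul_one_sub_smul_baseChange rfl, Finset.prod_eq_zero_iff,
      ← hA.exists_eigenvalues_iff rfl]
    simp only [Finset.mem_univ, true_and, Complex.coe_algebraMap,
      Complex.cos_sub_sin_div_mul_eq_zero_iff hb.ne', eq_div_iff hb']
  refine ⟨hzeros, fun h => ?_⟩
  obtain ⟨l, -, j, rfl⟩ := hzeros.mp h
  simp [Complex.div_ofReal_im]
end

section
/- The supremum over all real s of the kernels LinearMap.ker( cos(s·b) • (1 : E →ₗ[ℝ] E) − (sin(s·b)/b) • A ) equals the whole space E (i.e. this supremum of submodules is ⊤), for every self-adjoint A and every b > 0. -/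
/-- Let `E` be a finite-dimensional real inner product space, `A` a self-adjoint
endomorphism of `E` and `b > 0`.  The supremum over all real `s` of the kernels
`ker(cos(s·b) • id − (sin(s·b)/b) • A)` equals the whole space `E`. -/
theorem iSup_ker_cos_smul_sub_sin_smul_eq_top
    {E : Type*} [NormedAddCommGroup E] [InnerProductSpace ℝ E] [FiniteDimensional ℝ E]
    (A : E →ₗ[ℝ] E) (hA : A.IsSymmetric) (b : ℝ) (hb : 0 < b) :
    (⨆ s : ℝ,
      LinearMap.ker (Real.cos (s * b) • (1 : E →ₗ[ℝ] E) - (Real.sin (s * b) / b) • A)) = ⊤ := by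
  have hspan : (⨆ μ : ℝ, Module.End.eigenspace A μ) = ⊤ := by
    have h := hA.orthogonalComplement_iSup_eigenspaces_eq_bot
    rwa [Submodule.orthogonal_eq_bot_iff] at h
  rw [← top_le_iff, ← hspan]
  refine iSup_le fun μ => ?_
  -- choose s with cos(s*b) = μ/r, sin(s*b) = b/r, r = sqrt (μ² + b²)
  set r : ℝ := Real.sqrt (μ ^ 2 + b ^ 2) with hr
  have hr0 : 0 < r := Real.sqrt_pos.2 (by positivity)
  have hμr : μ / r ∈ Set.Icc (-1 : ℝ) 1 := by
    constructor
    · rw [neg_le, ← neg_div]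
      rw [div_le_one hr0]
      calc -μ ≤ |μ| := neg_le_abs μ
        _ = Real.sqrt (μ ^ 2) := (Real.sqrt_sq_eq_abs μ).symm
        _ ≤ r := Real.sqrt_le_sqrt (by nlinarith)
    · rw [div_le_one hr0]
      calc μ ≤ |μ| := le_abs_self μ
        _ = Real.sqrt (μ ^ 2) := (Real.sqrt_sq_eq_abs μ).symm
        _ ≤ r := Real.sqrt_le_sqrt (by nlinarith)
  set θ := Real.arccos (μ / r) with hθ
  have hcos : Real.cos θ = μ / r := Real.cos_arccos hμr.1 hμr.2
  have hsin : Real.sin θ = b / r := by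
    rw [hθ, Real.sin_arccos]
    have hrsq : r ^ 2 = μ ^ 2 + b ^ 2 := Real.sq_sqrt (by positivity)
    have : 1 - (μ / r) ^ 2 = (b / r) ^ 2 := by
      field_simp; ring
      nlinarith
    rw [this, Real.sqrt_sq (by positivity)]
  refine le_iSup_of_le (θ / b) ?_
  intro x hx
  have hAx : A x = μ • x := Module.End.mem_eigenspace_iff.1 hx
  simp only [LinearMap.mem_ker, LinearMap.sub_apply, LinearMap.smul_apply, Module.End.one_apply,
    div_mul_cancel₀ θ hb.ne', hcos, hsin, hAx]
  rw [smul_smul, ← sub_smul]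
  have : μ / r - b / r / b * μ = 0 := by field_simp; ring
  rw [this, zero_smul]
end

section
/- Let V be a real vector space, B a symmetric ℝ-bilinear form on V, and J : V →ₗ[ℝ] V a linear map with J ∘ J = −id and B(J x, J y) = − B(x, y) for all x, y ∈ V. Let A : V →ₗ[ℝ] V be a linear map with A ∘ J = J ∘ A and B(A x, y) = B(x, A y) for all x, y ∈ V. Suppose x, y ∈ V and a, b, c, d ∈ ℝ satisfy A x = a • x + b • J x, A y = c • y + d • J y, and (a, b) ≠ (c, d). Then B(x, y) = 0, B(x, J y) = 0, B(J x, y) = 0, and B(J x, J y) = 0. -/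
/-- Let `V` be a real vector space, `B` a symmetric ℝ-bilinear form on `V`,
and `J : V →ₗ[ℝ] V` with `J ∘ J = −id` and `B(J x, J y) = −B(x, y)`.  Let `A : V →ₗ[ℝ] V` with
`A ∘ J = J ∘ A` and `B(A x, y) = B(x, A y)`.  Suppose `x, y ∈ V` and `a, b, c, d ∈ ℝ` satisfy
`A x = a • x + b • J x`, `A y = c • y + d • J y`, and `(a, b) ≠ (c, d)`.  Then
`B(x, y) = 0`, `B(x, J y) = 0`, `B(J x, y) = 0` and `B(J x, J y) = 0`, i.e. the `J`-eigenspaces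
of `A` for distinct `J`-eigenvalues are orthogonal to one another. -/
theorem antiKaehler_jEigenspaces_orthogonal
    {V : Type*} [AddCommGroup V] [Module ℝ V]
    (B : V →ₗ[ℝ] V →ₗ[ℝ] ℝ) (hBsymm : ∀ x y : V, B x y = B y x)
    (J : V →ₗ[ℝ] V) (hJ : ∀ x : V, J (J x) = -x)
    (hBJ : ∀ x y : V, B (J x) (J y) = - B x y)
    (A : V →ₗ[ℝ] V) (hAJ : ∀ x : V, A (J x) = J (A x))
    (hBA : ∀ x y : V, B (A x) y = B x (A y))
    (x y : V) (a b c d : ℝ)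
    (hx : A x = a • x + b • J x) (hy : A y = c • y + d • J y)
    (hne : (a, b) ≠ (c, d)) :
    B x y = 0 ∧ B x (J y) = 0 ∧ B (J x) y = 0 ∧ B (J x) (J y) = 0 := by
  set p := B x y with hp
  set q := B x (J y) with hq
  -- B (J x) y = q
  have hswap : B (J x) y = q := by
    have h := hBJ y (J x)
    rw [hJ x, map_neg] at h
    have : B (J y) x = B y (J x) := by linarith [h]
    rw [hBsymm (J x) y, ← this, hBsymm (J y) x]
  have hJJ : B (J x) (J y) = -p := hBJ x y
  -- equation 1 : (a-c) p + (b-d) q = 0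
  have e1 : a * p + b * q = c * p + d * q := by
    have h := hBA x y
    rw [hx, hy, map_add, map_smul, map_smul, LinearMap.add_apply,
      LinearMap.smul_apply, LinearMap.smul_apply, map_add, map_smul, map_smul] at h
    simpa [hswap, smul_eq_mul] using h
  -- equation 2 : a q - b p = c q - d p
  have e2 : a * q - b * p = c * q - d * p := by
    have h := hBA x (J y)
    rw [hAJ y, hx, hy] at h
    simp only [map_add, map_smul, map_neg, LinearMap.add_apply, LinearMap.smul_apply,
      LinearMap.neg_apply, hJ y, hJJ, smul_eq_mul, smul_neg] at h
    linarith [h]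
  have huv : (a - c) ≠ 0 ∨ (b - d) ≠ 0 := by
    by_contra hcon
    push_neg at hcon
    exact hne (by ext <;> simp <;> linarith [hcon.1, hcon.2])
  have hpos : (a - c) ^ 2 + (b - d) ^ 2 > 0 := by
    rcases huv with h | h <;> positivity
  have hp0 : p = 0 := by
    have hcomb : ((a - c) ^ 2 + (b - d) ^ 2) * p = 0 := by
      linear_combination (a - c) * e1 - (b - d) * e2
    exact (mul_eq_zero.mp hcomb).resolve_left hpos.ne'
  have hq0 : q = 0 := by
    have hcomb : ((a - c) ^ 2 + (b - d) ^ 2) * q = 0 := by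
      linear_combination (b - d) * e1 + (a - c) * e2
    exact (mul_eq_zero.mp hcomb).resolve_left hpos.ne'
  exact ⟨hp0, hq0, hswap.trans hq0, hJJ.trans (by rw [hp0, neg_zero])⟩
end
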